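/- For all m ≥ 0 and r ≥ 1 with r > m, f_{m+r+1,r} = 0; that is, there is no Ferrers diagram λ ⊆ ℕ^r with m + r + 1 elements containing μ_r such that every component of the skew diagram λ ∖ μ_r contains an element that is not of type 1, when m < r. -/

import Mathlib

/-- A Ferrers diagram in `ℕ^k`: a finite nonempty downward-closed subset of `Fin k → ℕ`. -/
def IsFerrers {k : ℕ} (F : Finset (Fin k → ℕ)) : Prop :=
  F.Nonempty ∧ ∀ a ∈ F, ∀ x : Fin k → ℕ, (∀ i, x i ≤ a i) → x ∈ F

/-- A Ferrers diagram is strict if every coordinate is used by some element. -/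
def IsStrict {k : ℕ} (F : Finset (Fin k → ℕ)) : Prop :=
  ∀ i : Fin k, ∃ a ∈ F, a i ≠ 0

/-- `numPart d n` = `p_d(n)`, the number of Ferrers diagrams in `ℕ^(d+1)` with `n` elements. -/
noncomputable def numPart (d n : ℕ) : ℕ :=
  Nat.card {F : Finset (Fin (d + 1) → ℕ) // IsFerrers F ∧ F.card = n}

/-- `Amat n r` = `a_{n,r}`, the number of strict Ferrers diagrams in `ℕ^r` with `n` elements. -/
noncomputable def Amat (n r : ℕ) : ℕ :=
  Nat.card {F : Finset (Fin r → ℕ) // IsFerrers F ∧ IsStrict F ∧ F.card = n}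

/-- `mu r` = `μ_r = {0, e_1, …, e_r} ⊆ ℕ^r`. -/
def mu (r : ℕ) : Finset (Fin r → ℕ) :=
  insert 0 (Finset.univ.image fun i => Pi.single i 1)

/-- The reduced dimension of a Ferrers diagram `F ⊆ ℕ^x` (containing `μ_x`): the number of
coordinates used by some element of `F \ μ_x`. -/
noncomputable def rdim {x : ℕ} (F : Finset (Fin x → ℕ)) : ℕ :=
  Nat.card {i : Fin x // ∃ a ∈ F \ mu x, a i ≠ 0}

/-- Two coordinates are touched by a common element of the skew diagram `σ`. -/
def Touches {x : ℕ} (σ : Finset (Fin x → ℕ)) (i j : Fin x) : Prop :=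
  ∃ a ∈ σ, a i ≠ 0 ∧ a j ≠ 0

/-- `B` is a block of the finest partition of `Fin x` compatible with `σ`,
i.e. an equivalence class of the equivalence relation generated by `Touches σ`. -/
def IsBlock {x : ℕ} (σ : Finset (Fin x → ℕ)) (B : Set (Fin x)) : Prop :=
  ∃ i : Fin x, B = {j | Relation.EqvGen (Touches σ) i j}

/-- The support of `a` is contained in `B`. -/
def SuppIn {x : ℕ} (a : Fin x → ℕ) (B : Set (Fin x)) : Prop :=
  ∀ i, a i ≠ 0 → i ∈ B

/-- The component of `σ` with block `B` is of type `σ₂`: `B = {i, j}` with `i ≠ j`, and the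
elements of `σ` supported in `B` are exactly `{e_i + e_j}`. -/
def IsSigma2 {x : ℕ} (σ : Finset (Fin x → ℕ)) (B : Set (Fin x)) : Prop :=
  ∃ i j : Fin x, i ≠ j ∧ B = {i, j} ∧
    {a ∈ (σ : Set (Fin x → ℕ)) | SuppIn a B} = {Pi.single i 1 + Pi.single j 1}

/-- `Cmat m x` = `c_{m,x}`. -/
noncomputable def Cmat (m x : ℕ) : ℕ :=
  Nat.card {F : Finset (Fin x → ℕ) //
    IsFerrers F ∧ mu x ⊆ F ∧ F.card = m + x + 1 ∧ rdim F = x}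

/-- `Dmat m x` = `d_{m,x}`. -/
noncomputable def Dmat (m x : ℕ) : ℕ :=
  Nat.card {F : Finset (Fin x → ℕ) //
    IsFerrers F ∧ mu x ⊆ F ∧ F.card = m + x + 1 ∧ rdim F = x ∧
      ∀ B : Set (Fin x), IsBlock (F \ mu x) B → ¬ IsSigma2 (F \ mu x) B}

/-- A point of type 1: `e_i + e_j` for some `i ≠ j`. -/
def IsType1 {r : ℕ} (a : Fin r → ℕ) : Prop :=
  ∃ i j : Fin r, i ≠ j ∧ a = Pi.single i 1 + Pi.single j 1

/-- A point of type 2: `2·e_i` for some `i`. -/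
def IsType2 {r : ℕ} (a : Fin r → ℕ) : Prop :=
  ∃ i : Fin r, a = Pi.single i 2

/-- `Fmat n r` = `f_{n,r}`. -/
noncomputable def Fmat (n r : ℕ) : ℕ :=
  Nat.card {F : Finset (Fin r → ℕ) //
    IsFerrers F ∧ mu r ⊆ F ∧ F.card = n ∧
      ∀ B : Set (Fin r), IsBlock (F \ mu r) B →
        ∃ a ∈ F \ mu r, SuppIn a B ∧ ¬ IsType1 a}

/-!
Let `σ = λ \ μ_r`, so `|σ| = m`. If a point of `σ` has nonzero coordinates `i ≠ j`, then
`e_i + e_j`, which lies below it, is in `σ` by downward closure; hence the blocks of `σ` are the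
connected components of the graph on `Fin r` whose edges are the type-1 points of `σ`. A graph on
`r` vertices with `c` components has at least `r - c` edges, and every component contributes one
more point of `σ` that is not of type 1, so `m = |σ| ≥ r`.
-/

namespace SimpleGraph

variable {V : Type*}

theorem Reachable.exists_adj_dist_lt {G : SimpleGraph V} {u v : V} (h : G.Reachable u v)
    (hne : u ≠ v) : ∃ w, G.Adj w v ∧ G.dist u w < G.dist u v := by
  obtain ⟨p, hp⟩ := h.exists_walk_length_eq_dist
  obtain ⟨w, hadj, q, hq⟩ := Walk.exists_eq_cons_of_ne hne.symm p.reverse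
  refine ⟨w, hadj.symm, ?_⟩
  have hlen : q.length + 1 = p.length := by simpa using (congrArg Walk.length hq).symm
  have := dist_le q.reverse
  rw [Walk.length_reverse] at this
  omega

/-- Every vertex other than the chosen root of its component is sent to the edge joining it to a
neighbour strictly closer to the root; no edge is hit twice since distances strictly decrease. -/
theorem card_le_card_edgeSet_add_card_connectedComponent [Finite V] (G : SimpleGraph V) :
    Nat.card V ≤ Nat.card G.edgeSet + Nat.card G.ConnectedComponent := by
  classical
  let root : V → V := fun v => (G.connectedComponentMk v).out
  have reachable_root (v : V) : G.Reachable (root v) v :=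
    ConnectedComponent.exact (Quot.out_eq _)
  have root_eq {v w : V} (h : G.Reachable v w) : root v = root w := by
    simp only [root, ConnectedComponent.sound h]
  choose parent hparent using fun v (hv : root v ≠ v) => (reachable_root v).exists_adj_dist_lt hv
  let f : V → G.edgeSet ⊕ G.ConnectedComponent := fun v =>
    if hv : root v = v then .inr (G.connectedComponentMk v)
    else .inl ⟨s(parent v hv, v), (hparent v hv).1⟩
  have hf : Function.Injective f := by
    intro v w hvw
    simp only [f] at hvw
    split_ifs at hvw with hv hw hw
    · rw [← hv, ← hw]
      exact root_eq (ConnectedComponent.exact (Sum.inr_injective hvw))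
    · have hs : s(parent v hv, v) = s(parent w hw, w) :=
        congrArg Subtype.val (Sum.inl_injective hvw)
      obtain ⟨-, rfl⟩ | ⟨hpv, hpw⟩ := Sym2.eq_iff.mp hs
      · rfl
      · have hroot : root v = root w :=
          root_eq ((hparent v hv).1.symm.reachable.trans (hpv ▸ .rfl))
        have hv' := (hparent v hv).2
        have hw' := (hparent w hw).2
        rw [hpv] at hv'
        rw [← hpw, ← hroot] at hw'
        omega
  simpa [Nat.card_sum] using Nat.card_le_card_of_injective f hf

end SimpleGraph

section SumSingles

variable {ι : Type*} [DecidableEq ι]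

def sumSingles : Sym2 ι → ι → ℕ :=
  Sym2.lift ⟨fun i j => Pi.single i 1 + Pi.single j 1, fun _ _ => add_comm _ _⟩

@[simp]
theorem sumSingles_mk (i j : ι) : sumSingles s(i, j) = Pi.single i 1 + Pi.single j 1 := rfl

theorem sumSingles_injective : Function.Injective (sumSingles : Sym2 ι → ι → ℕ) := by
  intro e e' h
  induction e using Sym2.ind
  induction e' using Sym2.ind
  simpa [Pi.single_add_single_eq_single_add_single, Sym2.eq_iff] using h

def PairClosed (σ : Finset (ι → ℕ)) : Prop :=
  ∀ a ∈ σ, ∀ i j, i ≠ j → a i ≠ 0 → a j ≠ 0 → sumSingles s(i, j) ∈ σ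

def type1Graph (σ : Finset (ι → ℕ)) : SimpleGraph ι :=
  SimpleGraph.fromEdgeSet {e | sumSingles e ∈ σ}

end SumSingles

section Skew

variable {r : ℕ}

theorem sumSingles_mem_of_mem_edgeSet {σ : Finset (Fin r → ℕ)} {e : Sym2 (Fin r)}
    (he : e ∈ (type1Graph σ).edgeSet) : sumSingles e ∈ σ ∧ IsType1 (sumSingles e) := by
  induction e using Sym2.ind with
  | h i j =>
    rw [type1Graph, SimpleGraph.mem_edgeSet, SimpleGraph.fromEdgeSet_adj] at he
    exact ⟨he.1, i, j, he.2, rfl⟩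

theorem reachable_of_eqvGen_touches {σ : Finset (Fin r → ℕ)} (hσ : PairClosed σ)
    {i j : Fin r} (h : Relation.EqvGen (Touches σ) i j) : (type1Graph σ).Reachable i j := by
  induction h with
  | rel i j hij =>
    obtain ⟨a, ha, hi, hj⟩ := hij
    by_cases hne : i = j
    · exact hne ▸ .rfl
    · exact SimpleGraph.Adj.reachable
        ((SimpleGraph.fromEdgeSet_adj _).2 ⟨hσ a ha i j hne hi hj, hne⟩)
  | refl => exact .rfl
  | symm _ _ _ ih => exact ih.symm
  | trans _ _ _ _ _ ih ih' => exact ih.trans ih'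

theorem le_card_of_forall_isBlock {σ : Finset (Fin r → ℕ)} (h0 : 0 ∉ σ) (hσ : PairClosed σ)
    (hwit : ∀ B, IsBlock σ B → ∃ a ∈ σ, SuppIn a B ∧ ¬ IsType1 a) : r ≤ σ.card := by
  set G := type1Graph σ
  choose w hwσ hwB hw1 using fun c : G.ConnectedComponent => hwit _ ⟨c.out, rfl⟩
  let f : G.edgeSet ⊕ G.ConnectedComponent → σ :=
    Sum.elim (fun e => ⟨sumSingles e, (sumSingles_mem_of_mem_edgeSet e.2).1⟩)
      (fun c => ⟨w c, hwσ c⟩)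
  have hf : Function.Injective f := by
    rintro (e | c) (e' | c') h <;>
      simp only [f, Sum.elim_inl, Sum.elim_inr, Subtype.mk.injEq] at h
    · exact congrArg Sum.inl (Subtype.ext (sumSingles_injective h))
    · exact absurd (h ▸ (sumSingles_mem_of_mem_edgeSet e.2).2) (hw1 c')
    · exact absurd (h ▸ (sumSingles_mem_of_mem_edgeSet e'.2).2) (hw1 c)
    · obtain ⟨k, hk⟩ := Function.ne_iff.mp (ne_of_mem_of_not_mem (hwσ c) h0)
      have hck : Relation.EqvGen (Touches σ) c.out k := hwB c k hk
      have hc'k : Relation.EqvGen (Touches σ) c'.out k := hwB c' k (h ▸ hk)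
      have hreach := reachable_of_eqvGen_touches hσ (hck.trans _ _ _ hc'k.symm)
      rw [← Quot.out_eq c, ← Quot.out_eq c']
      exact congrArg Sum.inr (SimpleGraph.ConnectedComponent.sound hreach)
  calc r = Nat.card (Fin r) := (Nat.card_fin r).symm
    _ ≤ Nat.card G.edgeSet + Nat.card G.ConnectedComponent :=
      G.card_le_card_edgeSet_add_card_connectedComponent
    _ = Nat.card (G.edgeSet ⊕ G.ConnectedComponent) := Nat.card_sum.symm
    _ ≤ Nat.card σ := Nat.card_le_card_of_injective f hf
    _ = σ.card := Nat.card_eq_finsetCard σ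

end Skew

theorem card_mu (r : ℕ) : (mu r).card = r + 1 := by
  have hsingle : Function.Injective fun i : Fin r => (Pi.single i 1 : Fin r → ℕ) :=
    fun i j h => by simpa [Pi.single_apply, eq_comm] using congrFun h j
  rw [mu, Finset.card_insert_of_notMem, Finset.card_image_of_injective _ hsingle,
    Finset.card_univ, Fintype.card_fin]
  simp [funext_iff, Pi.single_apply]

section Ferrers

variable {r : ℕ}

theorem sumSingles_notMem_mu {i j : Fin r} (hij : i ≠ j) : sumSingles s(i, j) ∉ mu r := by
  simp only [mu, sumSingles_mk, Finset.mem_insert, Finset.mem_image, Finset.mem_univ, true_and,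
    not_or, not_exists, funext_iff, not_forall]
  refine ⟨⟨i, by simp [hij]⟩, fun k => ?_⟩
  by_cases hk : j = k
  · exact ⟨i, by simp [← hk, hij]⟩
  · exact ⟨j, by simp [hk, hij.symm]⟩

theorem IsFerrers.pairClosed_sdiff_mu {F : Finset (Fin r → ℕ)} (hF : IsFerrers F) :
    PairClosed (F \ mu r) := by
  intro a ha i j hij hi hj
  rw [Finset.mem_sdiff] at ha ⊢
  refine ⟨hF.2 a ha.1 _ fun k => ?_, sumSingles_notMem_mu hij⟩
  simp only [sumSingles_mk, Pi.add_apply, Pi.single_apply]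
  split_ifs <;> subst_vars <;> omega

end Ferrers

theorem statement13_general (m r : ℕ) (h : m < r) : Fmat (m + r + 1) r = 0 := by
  rw [Fmat, Nat.card_eq_zero]
  refine .inl ⟨fun ⟨F, hF, hmu, hcard, hblocks⟩ => ?_⟩
  have hσ : r ≤ (F \ mu r).card :=
    le_card_of_forall_isBlock (by simp [mu]) hF.pairClosed_sdiff_mu hblocks
  rw [Finset.card_sdiff_of_subset hmu, hcard, card_mu] at hσ
  omega

/-- `f_{m+r+1,r} = 0` whenever `r ≥ 1` and `m < r`. -/
theorem statement13 (m r : ℕ) (hr : 1 ≤ r) (h : m < r) : Fmat (m + r + 1) r = 0 :=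
  statement13_general m r h
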